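/- Let f₁, f₂, ζ₁, ζ₂ : ℝ^m × ℝ^n → ℝ be smooth, with (x*, y*) a non-degenerate differential Nash equilibrium of (f₁, f₂). Then for all sufficiently small s, the perturbed game (f₁ + sζ₁, f₂ + sζ₂) possesses a non-degenerate differential Nash equilibrium near (x*, y*): i.e., there exists ε > 0 and a continuous map s ↦ (x(s), y(s)) with (x(0),y(0)) = (x*,y*) such that for |s| < ε, ω_s(x(s),y(s)) = 0, the partial Hessians D²ₓₓ(f₁+sζ₁) and D²_yy(f₂+sζ₂) at (x(s),y(s)) are positive definite, and dω_s(x(s),y(s)) is invertible. -/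

import Mathlib

open Topology InnerProductSpace Set ContinuousLinearMap Filter

section AuxLemmas

theorem aux_pfderiv {K E G : Type*}
    [NormedAddCommGroup K] [NormedSpace ℝ K]
    [NormedAddCommGroup E] [NormedSpace ℝ E]
    [NormedAddCommGroup G] [NormedSpace ℝ G]
    (g : K × E → G) (hg : ContDiff ℝ (⊤ : ℕ∞) g) (k : K) (x : E) :
    fderiv ℝ (fun x' => g (k, x')) x = (fderiv ℝ g (k, x)).comp (inr ℝ K E) :=
  ((hg.differentiable (by simp) (k, x)).hasFDerivAt.comp x
    (hasFDerivAt_prodMk_right k x)).fderiv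

theorem aux_grad {K E : Type*}
    [NormedAddCommGroup K] [NormedSpace ℝ K]
    [NormedAddCommGroup E] [InnerProductSpace ℝ E] [CompleteSpace E]
    (g : K × E → ℝ) (hg : ContDiff ℝ (⊤ : ℕ∞) g) :
    ContDiff ℝ (⊤ : ℕ∞) (fun q : K × E => gradient (fun x' => g (q.1, x')) q.2) := by
  have heq : (fun q : K × E => gradient (fun x' => g (q.1, x')) q.2)
      = fun q : K × E => (toDual ℝ E).symm ((fderiv ℝ g q).comp (inr ℝ K E)) := by
    funext q
    show (toDual ℝ E).symm (fderiv ℝ (fun x' => g (q.1, x')) q.2) = _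
    rw [aux_pfderiv g hg q.1 q.2]
  rw [heq]
  exact (toDual ℝ E).symm.contDiff.comp ((hg.fderiv_right (by simp)).clm_comp contDiff_const)

variable {E : Type*} [NormedAddCommGroup E] [InnerProductSpace ℝ E] [FiniteDimensional ℝ E]

theorem aux_posdef_nhds (B₀ : E →L[ℝ] E)
    (h : ∀ v : E, v ≠ 0 → 0 < (inner ℝ (B₀ v) v : ℝ)) :
    ∀ᶠ B in 𝓝 B₀, ∀ v : E, v ≠ 0 → 0 < (inner ℝ (B v) v : ℝ) := by
  by_cases htriv : ∀ v : E, v = 0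
  · exact Filter.Eventually.of_forall (fun B v hv => absurd (htriv v) hv)
  push_neg at htriv
  obtain ⟨v₁, hv₁⟩ := htriv
  have : Nontrivial E := ⟨v₁, 0, hv₁⟩
  have hsph : (Metric.sphere (0 : E) 1).Nonempty :=
    NormedSpace.sphere_nonempty.2 zero_le_one
  have hcont : Continuous fun v : E => (inner ℝ (B₀ v) v : ℝ) :=
    (B₀.continuous).inner continuous_id
  obtain ⟨v₀, hv₀mem, hmin⟩ := (isCompact_sphere (0 : E) 1).exists_isMinOn hsph
    hcont.continuousOn
  have hv₀norm : ‖v₀‖ = 1 := by simpa using hv₀mem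
  set c : ℝ := inner ℝ (B₀ v₀) v₀ with hc
  have hcpos : 0 < c := h v₀ (fun h0 => by simp [h0] at hv₀norm)
  rw [Metric.eventually_nhds_iff]
  refine ⟨c / 2, by linarith, fun B hB v hv => ?_⟩
  have hvn : (0 : ℝ) < ‖v‖ := norm_pos_iff.2 hv
  set u : E := ‖v‖⁻¹ • v with hu
  have hun : ‖u‖ = 1 := by
    rw [hu, norm_smul, norm_inv, norm_norm, inv_mul_cancel₀ (ne_of_gt hvn)]
  have humem : u ∈ Metric.sphere (0 : E) 1 := by simpa using hun
  have h1 : c ≤ inner ℝ (B₀ u) u := hmin humem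
  have h2 : |(inner ℝ ((B - B₀) u) u : ℝ)| ≤ ‖B - B₀‖ := by
    calc |(inner ℝ ((B - B₀) u) u : ℝ)| ≤ ‖(B - B₀) u‖ * ‖u‖ := abs_real_inner_le_norm _ _
    _ ≤ ‖B - B₀‖ * ‖u‖ * ‖u‖ := by
        gcongr; exact (B - B₀).le_opNorm u
    _ = ‖B - B₀‖ := by rw [hun]; ring
  have hdist : ‖B - B₀‖ < c / 2 := by rwa [dist_eq_norm] at hB
  have h3 : 0 < (inner ℝ (B u) u : ℝ) := by
    have : (inner ℝ (B u) u : ℝ) = inner ℝ (B₀ u) u + inner ℝ ((B - B₀) u) u := by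
      rw [← inner_add_left]
      congr 1
      simp
    rw [this]
    have := abs_le.1 h2
    linarith
  have h4 : (inner ℝ (B u) u : ℝ) = ‖v‖⁻¹ * (‖v‖⁻¹ * inner ℝ (B v) v) := by
    rw [hu, map_smul, real_inner_smul_left, real_inner_smul_right]
  rw [h4] at h3
  have h6 := mul_pos (mul_pos hvn hvn) h3
  have h7 : ‖v‖ * ‖v‖ * (‖v‖⁻¹ * (‖v‖⁻¹ * inner ℝ (B v) v)) = inner ℝ (B v) v := by
    field_simp
  rwa [h7] at h6

theorem aux_bij_isUnit {E : Type*} [NormedAddCommGroup E] [NormedSpace ℝ E]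
    [FiniteDimensional ℝ E] (T : E →L[ℝ] E) :
    Function.Bijective T ↔ IsUnit T := by
  constructor
  · intro hbij
    let e := (LinearEquiv.ofBijective (T : E →ₗ[ℝ] E) hbij).toContinuousLinearEquiv
    have hce : ⇑e = ⇑T := rfl
    exact ⟨⟨T, e.symm.toContinuousLinearMap,
      by ext v; simp [ContinuousLinearMap.mul_apply, ← hce],
      by ext v; simp [ContinuousLinearMap.mul_apply, ← hce]⟩, rfl⟩
  · rintro ⟨u, rfl⟩
    refine Function.bijective_iff_has_inverse.2 ⟨(↑u⁻¹ : E →L[ℝ] E), fun v => ?_, fun v => ?_⟩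
    · rw [← ContinuousLinearMap.mul_apply, u.inv_mul, ContinuousLinearMap.one_apply]
    · rw [← ContinuousLinearMap.mul_apply, u.mul_inv, ContinuousLinearMap.one_apply]

end AuxLemmas

set_option maxHeartbeats 1000000 in
theorem aux_main
    {E F : Type*}
    [NormedAddCommGroup E] [InnerProductSpace ℝ E] [FiniteDimensional ℝ E]
    [NormedAddCommGroup F] [InnerProductSpace ℝ F] [FiniteDimensional ℝ F]
    (f₁ f₂ ζ₁ ζ₂ : E → F → ℝ)
    (hf₁ : ContDiff ℝ (⊤ : ℕ∞) (fun p : E × F => f₁ p.1 p.2))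
    (hf₂ : ContDiff ℝ (⊤ : ℕ∞) (fun p : E × F => f₂ p.1 p.2))
    (hζ₁ : ContDiff ℝ (⊤ : ℕ∞) (fun p : E × F => ζ₁ p.1 p.2))
    (hζ₂ : ContDiff ℝ (⊤ : ℕ∞) (fun p : E × F => ζ₂ p.1 p.2))
    (ω : ℝ → E × F →
         E × F)
    (hωdef : ∀ s p, ω s p =
      (gradient (fun x => f₁ x p.2 + s * ζ₁ x p.2) p.1,
       gradient (fun y => f₂ p.1 y + s * ζ₂ p.1 y) p.2))
    (x : E) (y : F)
    (hzero : ω 0 (x, y) = 0)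
    (hH₁ : ∀ v : E, v ≠ 0 →
      0 < (inner ℝ (fderiv ℝ (fun x' => gradient (fun x'' => f₁ x'' y) x') x v) v : ℝ))
    (hH₂ : ∀ w : F, w ≠ 0 →
      0 < (inner ℝ (fderiv ℝ (fun y' => gradient (fun y'' => f₂ x y'') y') y w) w : ℝ))
    (hinv : Function.Bijective (fderiv ℝ (ω 0) (x, y))) :
    ∃ ε > (0 : ℝ), ∃ γ : ℝ → E × F,
      ContinuousOn γ (Set.Ioo (-ε) ε) ∧ γ 0 = (x, y) ∧
      ∀ s : ℝ, |s| < ε →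
        ω s (γ s) = 0 ∧
        (∀ v : E, v ≠ 0 →
          0 < (inner ℝ (fderiv ℝ (fun x' =>
            gradient (fun x'' => f₁ x'' (γ s).2 + s * ζ₁ x'' (γ s).2) x') (γ s).1 v) v : ℝ)) ∧
        (∀ w : F, w ≠ 0 →
          0 < (inner ℝ (fderiv ℝ (fun y' =>
            gradient (fun y'' => f₂ (γ s).1 y'' + s * ζ₂ (γ s).1 y'') y') (γ s).2 w) w : ℝ)) ∧
        Function.Bijective (fderiv ℝ (ω s) (γ s)) := by
  -- smooth payoff families
  set g₁ : (ℝ × F) × E → ℝ := fun w => f₁ w.2 w.1.2 + w.1.1 * ζ₁ w.2 w.1.2 with hg₁def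
  set g₂ : (ℝ × E) × F → ℝ := fun w => f₂ w.1.2 w.2 + w.1.1 * ζ₂ w.1.2 w.2 with hg₂def
  have hg₁ : ContDiff ℝ (⊤ : ℕ∞) g₁ :=
    (hf₁.comp (contDiff_snd.prodMk (contDiff_snd.comp contDiff_fst))).add
      ((contDiff_fst.comp contDiff_fst).mul
        (hζ₁.comp (contDiff_snd.prodMk (contDiff_snd.comp contDiff_fst))))
  have hg₂ : ContDiff ℝ (⊤ : ℕ∞) g₂ :=
    (hf₂.comp ((contDiff_snd.comp contDiff_fst).prodMk contDiff_snd)).add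
      ((contDiff_fst.comp contDiff_fst).mul
        (hζ₂.comp ((contDiff_snd.comp contDiff_fst).prodMk contDiff_snd)))
  -- gradient families
  set Ψ₁ : (ℝ × F) × E → E := fun r => gradient (fun x' => g₁ (r.1, x')) r.2 with hΨ₁def
  set Ψ₂ : (ℝ × E) × F → F := fun r => gradient (fun y' => g₂ (r.1, y')) r.2 with hΨ₂def
  have hΨ₁ : ContDiff ℝ (⊤ : ℕ∞) Ψ₁ := aux_grad g₁ hg₁
  have hΨ₂ : ContDiff ℝ (⊤ : ℕ∞) Ψ₂ := aux_grad g₂ hg₂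
  -- combined vector field
  set G : ℝ × (E × F) → E × F :=
    fun q => (Ψ₁ ((q.1, q.2.2), q.2.1), Ψ₂ ((q.1, q.2.1), q.2.2)) with hGdef
  have hG : ContDiff ℝ (⊤ : ℕ∞) G :=
    (hΨ₁.comp ((contDiff_fst.prodMk (contDiff_snd.comp contDiff_snd)).prodMk
      (contDiff_fst.comp contDiff_snd))).prodMk
    (hΨ₂.comp ((contDiff_fst.prodMk (contDiff_fst.comp contDiff_snd)).prodMk
      (contDiff_snd.comp contDiff_snd)))
  have hωG : ∀ s p, ω s p = G (s, p) := by
    intro s p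
    rw [hωdef]
  set q₀ : ℝ × (E × F) := ((0 : ℝ), (x, y)) with hq₀def
  set A : ℝ × (E × F) →L[ℝ] E × F := fderiv ℝ G q₀ with hAdef
  set B : E × F →L[ℝ] E × F := fderiv ℝ (ω 0) (x, y) with hBdef
  have hωzero_fun : ω 0 = fun p => G (0, p) := funext fun p => hωG 0 p
  have hBA : B = A.comp (inr ℝ ℝ (E × F)) := by
    rw [hBdef, hωzero_fun]
    exact aux_pfderiv G hG 0 (x, y)
  have hBbij : Function.Bijective B := hinv
  have hkey : ∀ z : ℝ × (E × F), A z = A (z.1, 0) + B z.2 := by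
    intro z
    rw [hBA]
    have hz : z = (z.1, (0 : E × F)) + ((0 : ℝ), z.2) := by
      ext <;> simp
    calc A z = A ((z.1, (0 : E × F)) + ((0 : ℝ), z.2)) := by rw [← hz]
    _ = A (z.1, 0) + A (0, z.2) := map_add _ _ _
    _ = A (z.1, 0) + (A.comp (inr ℝ ℝ (E × F))) z.2 := rfl
  set T : ℝ × (E × F) →L[ℝ] ℝ × (E × F) :=
    (ContinuousLinearMap.fst ℝ ℝ (E × F)).prod A with hTdef
  have hTapp : ∀ z, T z = (z.1, A z) := fun z => rfl
  have hTbij : Function.Bijective T := by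
    constructor
    · intro a b hab
      rw [hTapp a, hTapp b, Prod.mk.injEq] at hab
      obtain ⟨h1, h2⟩ := hab
      rw [hkey a, hkey b, h1] at h2
      have h3 : B a.2 = B b.2 := add_left_cancel h2
      have h4 : a.2 = b.2 := hBbij.1 h3
      exact Prod.ext h1 h4
    · intro r
      obtain ⟨q, hq⟩ := hBbij.2 (r.2 - A (r.1, 0))
      refine ⟨(r.1, q), ?_⟩
      rw [hTapp]
      refine Prod.ext rfl ?_
      show A (r.1, q) = r.2
      rw [hkey (r.1, q)]
      simp only []
      rw [hq]
      abel
  set Teq : (ℝ × (E × F)) ≃L[ℝ] (ℝ × (E × F)) :=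
    (LinearEquiv.ofBijective (T : ℝ × (E × F) →ₗ[ℝ] ℝ × (E × F)) hTbij).toContinuousLinearEquiv
    with hTeqdef
  have hTeqcoe : (Teq : ℝ × (E × F) →L[ℝ] ℝ × (E × F)) = T := by
    apply ContinuousLinearMap.ext
    intro z
    rfl
  set H : ℝ × (E × F) → ℝ × (E × F) := fun q => (q.1, G q) with hHdef
  have hHstrict : HasStrictFDerivAt H (Teq : ℝ × (E × F) →L[ℝ] ℝ × (E × F)) q₀ := by
    rw [hTeqcoe, hTdef]
    exact ((ContinuousLinearMap.fst ℝ ℝ (E × F)).hasStrictFDerivAt).prodMk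
      (hG.contDiffAt.hasStrictFDerivAt (by simp))
  set e : OpenPartialHomeomorph (ℝ × (E × F)) (ℝ × (E × F)) :=
    hHstrict.toOpenPartialHomeomorph H with hedef
  have hecoe : ⇑e = H := hHstrict.toOpenPartialHomeomorph_coe
  have hsource : q₀ ∈ e.source := hHstrict.mem_toOpenPartialHomeomorph_source
  have heq₀ : e q₀ = ((0 : ℝ), (0 : E × F)) := by
    rw [hecoe]
    show (q₀.1, G q₀) = _
    have : G q₀ = 0 := by rw [← hωG 0 (x, y)]; exact hzero
    rw [this]
  have htarget0 : ((0 : ℝ), (0 : E × F)) ∈ e.target := by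
    rw [← heq₀]
    exact e.map_source hsource
  set Γ : ℝ → ℝ × (E × F) := fun s => e.symm (s, (0 : E × F)) with hΓdef
  set γ : ℝ → E × F := fun s => (Γ s).2 with hγdef
  have hΓ0 : Γ 0 = q₀ := by
    have h := e.left_inv hsource
    rw [heq₀] at h
    exact h
  have hγ0 : γ 0 = (x, y) := by rw [hγdef]; simp only []; rw [hΓ0]
  set U : Set ℝ := {s : ℝ | ((s, (0 : E × F)) : ℝ × (E × F)) ∈ e.target} with hUdef
  have hUopen : IsOpen U :=
    e.open_target.preimage (continuous_id.prodMk continuous_const)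
  have hU0 : (0 : ℝ) ∈ U := htarget0
  -- facts for s ∈ U
  have hΓfacts : ∀ s ∈ U, Γ s = (s, γ s) ∧ G (s, γ s) = 0 := by
    intro s hs
    have hmem : Γ s ∈ e.source := e.map_target hs
    have hright : e (Γ s) = (s, (0 : E × F)) := e.right_inv hs
    rw [hecoe] at hright
    have hfst : (Γ s).1 = s := congrArg Prod.fst hright
    have hΓeq : Γ s = (s, γ s) := Prod.ext hfst rfl
    have hsnd : G (Γ s) = 0 := congrArg Prod.snd hright
    rw [hΓeq] at hsnd
    exact ⟨hΓeq, hsnd⟩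
  -- fderiv of ω s
  set N : ℝ × (E × F) → (E × F →L[ℝ] E × F) :=
    fun q => (fderiv ℝ G q).comp (inr ℝ ℝ (E × F)) with hNdef
  have hωfderiv : ∀ s p, fderiv ℝ (ω s) p = N (s, p) := by
    intro s p
    have : ω s = fun p' => G (s, p') := funext fun p' => hωG s p'
    rw [this]
    exact aux_pfderiv G hG s p
  have hNcont : Continuous N :=
    ((hG.fderiv_right (m := (⊤ : ℕ∞)) (by simp)).continuous).clm_comp continuous_const
  have hNq₀ : N q₀ = B := hBA.symm
  have hNunit : IsUnit (N q₀) := (aux_bij_isUnit (N q₀)).1 (hNq₀ ▸ hBbij)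
  have hevN : ∀ᶠ q in 𝓝 q₀, IsUnit (N q) := by
    have h : ∀ᶠ T' in 𝓝 (N q₀), T' ∈ {T' : (E × F) →L[ℝ] E × F | IsUnit T'} :=
      (Units.isOpen (R := (E × F) →L[ℝ] E × F)).eventually_mem hNunit
    exact hNcont.continuousAt.eventually (h.mono fun _ hh => hh)
  -- positive definiteness families
  set M₁ : ℝ × (E × F) → (E →L[ℝ] E) := fun q =>
    fderiv ℝ (fun x' => gradient (fun x'' => f₁ x'' q.2.2 + q.1 * ζ₁ x'' q.2.2) x') q.2.1
    with hM₁def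
  set M₂ : ℝ × (E × F) → (F →L[ℝ] F) := fun q =>
    fderiv ℝ (fun y' => gradient (fun y'' => f₂ q.2.1 y'' + q.1 * ζ₂ q.2.1 y'') y') q.2.2
    with hM₂def
  have hM₁eq : M₁ = fun q =>
      (fderiv ℝ Ψ₁ ((q.1, q.2.2), q.2.1)).comp (inr ℝ (ℝ × F) E) :=
    funext fun q => aux_pfderiv Ψ₁ hΨ₁ (q.1, q.2.2) q.2.1
  have hM₂eq : M₂ = fun q =>
      (fderiv ℝ Ψ₂ ((q.1, q.2.1), q.2.2)).comp (inr ℝ (ℝ × E) F) :=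
    funext fun q => aux_pfderiv Ψ₂ hΨ₂ (q.1, q.2.1) q.2.2
  have hM₁cont : Continuous M₁ := by
    rw [hM₁eq]
    exact ((hΨ₁.fderiv_right (m := (⊤ : ℕ∞)) (by simp)).continuous.comp
      ((continuous_fst.prodMk (continuous_snd.snd)).prodMk
        (continuous_snd.fst))).clm_comp continuous_const
  have hM₂cont : Continuous M₂ := by
    rw [hM₂eq]
    exact ((hΨ₂.fderiv_right (m := (⊤ : ℕ∞)) (by simp)).continuous.comp
      ((continuous_fst.prodMk (continuous_snd.fst)).prodMk
        (continuous_snd.snd))).clm_comp continuous_const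
  have hM₁q₀ : ∀ v : E, v ≠ 0 → 0 < (inner ℝ (M₁ q₀ v) v : ℝ) := by
    intro v hv
    have h1 : M₁ q₀ = fderiv ℝ (fun x' => gradient (fun x'' => f₁ x'' y) x') x := by
      show fderiv ℝ (fun x' => gradient (fun x'' => f₁ x'' y + (0:ℝ) * ζ₁ x'' y) x') x = _
      simp only [zero_mul, add_zero]
    rw [h1]
    exact hH₁ v hv
  have hM₂q₀ : ∀ w : F, w ≠ 0 → 0 < (inner ℝ (M₂ q₀ w) w : ℝ) := by
    intro w hw
    have h1 : M₂ q₀ = fderiv ℝ (fun y' => gradient (fun y'' => f₂ x y'') y') y := by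
      show fderiv ℝ (fun y' => gradient (fun y'' => f₂ x y'' + (0:ℝ) * ζ₂ x y'') y') y = _
      simp only [zero_mul, add_zero]
    rw [h1]
    exact hH₂ w hw
  have hev₁ : ∀ᶠ q in 𝓝 q₀, ∀ v : E, v ≠ 0 → 0 < (inner ℝ (M₁ q v) v : ℝ) :=
    hM₁cont.continuousAt.eventually (aux_posdef_nhds (M₁ q₀) hM₁q₀)
  have hev₂ : ∀ᶠ q in 𝓝 q₀, ∀ w : F, w ≠ 0 → 0 < (inner ℝ (M₂ q w) w : ℝ) :=
    hM₂cont.continuousAt.eventually (aux_posdef_nhds (M₂ q₀) hM₂q₀)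
  -- pull back along Γ
  have hΓcont0 : Filter.Tendsto Γ (𝓝 0) (𝓝 q₀) := by
    have h1 : Filter.Tendsto (fun s : ℝ => ((s, (0 : E × F)) : ℝ × (E × F))) (𝓝 0)
        (𝓝 ((0 : ℝ), (0 : E × F))) :=
      Continuous.tendsto (continuous_id.prodMk continuous_const) 0
    have hc : ContinuousAt e.symm ((0 : ℝ), (0 : E × F)) :=
      e.symm.continuousAt (by rw [OpenPartialHomeomorph.symm_source]; exact htarget0)
    have h2 : Filter.Tendsto (⇑e.symm) (𝓝 ((0 : ℝ), (0 : E × F))) (𝓝 q₀) := by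
      rw [← hΓ0]
      exact hc
    exact h2.comp h1
  have hall : ∀ᶠ s in 𝓝 (0 : ℝ),
      ((∀ v : E, v ≠ 0 → 0 < (inner ℝ (M₁ (Γ s) v) v : ℝ)) ∧
       (∀ w : F, w ≠ 0 → 0 < (inner ℝ (M₂ (Γ s) w) w : ℝ)) ∧
       IsUnit (N (Γ s))) ∧ s ∈ U :=
    (hΓcont0.eventually (hev₁.and (hev₂.and hevN))).and (hUopen.eventually_mem hU0)
  obtain ⟨ε, hεpos, hball⟩ := Metric.eventually_nhds_iff.1 hall
  refine ⟨ε, hεpos, γ, ?_, hγ0, ?_⟩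
  · -- continuity
    have hIooU : Set.Ioo (-ε) ε ⊆ U := by
      intro s hs
      have hdist : dist s 0 < ε := by
        rw [Real.dist_eq, sub_zero, abs_lt]
        exact ⟨hs.1, hs.2⟩
      exact (hball hdist).2
    have hΓcontOn : ContinuousOn Γ U := by
      refine (e.symm.continuousOn.comp
        ((continuous_id.prodMk continuous_const).continuousOn) ?_)
      intro s hs
      rw [OpenPartialHomeomorph.symm_source]
      exact hs
    exact (continuous_snd.comp_continuousOn (hΓcontOn.mono hIooU))
  · intro s hs
    have hdist : dist s 0 < ε := by rwa [Real.dist_eq, sub_zero]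
    obtain ⟨⟨hpos₁, hpos₂, hunit⟩, hsU⟩ := hball hdist
    obtain ⟨hΓeq, hGzero⟩ := hΓfacts s hsU
    rw [hΓeq] at hpos₁ hpos₂ hunit
    refine ⟨?_, ?_, ?_, ?_⟩
    · rw [hωG s (γ s)]
      exact hGzero
    · exact fun v hv => hpos₁ v hv
    · exact fun w hw => hpos₂ w hw
    · rw [hωfderiv s (γ s)]
      exact (aux_bij_isUnit (N (s, γ s))).2 hunit

theorem stmt_11
    (m n : ℕ)
    (f₁ f₂ ζ₁ ζ₂ : EuclideanSpace ℝ (Fin m) → EuclideanSpace ℝ (Fin n) → ℝ)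
    (hf₁ : ContDiff ℝ (⊤ : ℕ∞) (fun p : EuclideanSpace ℝ (Fin m) × EuclideanSpace ℝ (Fin n) => f₁ p.1 p.2))
    (hf₂ : ContDiff ℝ (⊤ : ℕ∞) (fun p : EuclideanSpace ℝ (Fin m) × EuclideanSpace ℝ (Fin n) => f₂ p.1 p.2))
    (hζ₁ : ContDiff ℝ (⊤ : ℕ∞) (fun p : EuclideanSpace ℝ (Fin m) × EuclideanSpace ℝ (Fin n) => ζ₁ p.1 p.2))
    (hζ₂ : ContDiff ℝ (⊤ : ℕ∞) (fun p : EuclideanSpace ℝ (Fin m) × EuclideanSpace ℝ (Fin n) => ζ₂ p.1 p.2))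
    (ω : ℝ → EuclideanSpace ℝ (Fin m) × EuclideanSpace ℝ (Fin n) →
         EuclideanSpace ℝ (Fin m) × EuclideanSpace ℝ (Fin n))
    (hωdef : ∀ s p, ω s p =
      (gradient (fun x => f₁ x p.2 + s * ζ₁ x p.2) p.1,
       gradient (fun y => f₂ p.1 y + s * ζ₂ p.1 y) p.2))
    (x : EuclideanSpace ℝ (Fin m)) (y : EuclideanSpace ℝ (Fin n))
    (hzero : ω 0 (x, y) = 0)
    (hH₁ : ∀ v : EuclideanSpace ℝ (Fin m), v ≠ 0 →
      0 < (inner ℝ (fderiv ℝ (fun x' => gradient (fun x'' => f₁ x'' y) x') x v) v : ℝ))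
    (hH₂ : ∀ w : EuclideanSpace ℝ (Fin n), w ≠ 0 →
      0 < (inner ℝ (fderiv ℝ (fun y' => gradient (fun y'' => f₂ x y'') y') y w) w : ℝ))
    (hinv : Function.Bijective (fderiv ℝ (ω 0) (x, y))) :
    ∃ ε > (0 : ℝ), ∃ γ : ℝ → EuclideanSpace ℝ (Fin m) × EuclideanSpace ℝ (Fin n),
      ContinuousOn γ (Set.Ioo (-ε) ε) ∧ γ 0 = (x, y) ∧
      ∀ s : ℝ, |s| < ε →
        ω s (γ s) = 0 ∧
        (∀ v : EuclideanSpace ℝ (Fin m), v ≠ 0 →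
          0 < (inner ℝ (fderiv ℝ (fun x' =>
            gradient (fun x'' => f₁ x'' (γ s).2 + s * ζ₁ x'' (γ s).2) x') (γ s).1 v) v : ℝ)) ∧
        (∀ w : EuclideanSpace ℝ (Fin n), w ≠ 0 →
          0 < (inner ℝ (fderiv ℝ (fun y' =>
            gradient (fun y'' => f₂ (γ s).1 y'' + s * ζ₂ (γ s).1 y'') y') (γ s).2 w) w : ℝ)) ∧
        Function.Bijective (fderiv ℝ (ω s) (γ s)) := by
  exact aux_main f₁ f₂ ζ₁ ζ₂ hf₁ hf₂ hζ₁ hζ₂ ω hωdef x y hzero hH₁ hH₂ hinv
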